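/- Let s ≥ 0, β ∈ (1/2, 1). There exists C = C(s, β) such that for nonzero l, m, k ∈ ℤ² with l + m + k = 0 and |l| ≤ |m| ≤ |k|, one has |l|^{2s} (1/|m|^{2β} − 1/|k|^{2β}) ≤ C |l|^{1−2β} |m|^{s−1} |k|^{s}. -/

import Mathlib

/-- The Euclidean norm of a lattice vector in ℤ². -/
noncomputable def znorm (v : ℤ × ℤ) : ℝ := Real.sqrt ((v.1 : ℝ) ^ 2 + (v.2 : ℝ) ^ 2)

/-!
Write `a = |l| ≤ b = |m| ≤ c = |k|`. Since `k = -(l + m)`, the triangle inequality gives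
`c - b ≤ a`, and Bernoulli's inequality for the exponent `p = 2β ≥ 1` gives
`1/b^p - 1/c^p ≤ p (c - b)/(b^p c)`. Hence the left side is at most `p a^(2s+1)/(b^p c)`, and
splitting `a^(2s+p) = a^(s+p-1) a^(s+1) ≤ b^(s+p-1) c^(s+1)` yields the claim with `C = 2β`.
-/

open Real Complex

lemma znorm_eq_norm (v : ℤ × ℤ) : znorm v = ‖(v.1 + v.2 * I : ℂ)‖ := by
  rw [znorm, ← norm_add_mul_I]
  norm_cast

lemma znorm_pos {v : ℤ × ℤ} (hv : v ≠ 0) : 0 < znorm v := by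
  rw [znorm_eq_norm, norm_pos_iff]
  intro h
  apply hv
  ext
  · simpa using congrArg re h
  · simpa using congrArg im h

lemma znorm_neg (v : ℤ × ℤ) : znorm (-v) = znorm v := by
  rw [znorm_eq_norm, znorm_eq_norm, ← norm_neg]
  congr 1
  simp only [Prod.fst_neg, Prod.snd_neg, Int.cast_neg]
  ring

lemma znorm_add_le (v w : ℤ × ℤ) : znorm (v + w) ≤ znorm v + znorm w := by
  have h : ((v + w).1 + (v + w).2 * I : ℂ) = (v.1 + v.2 * I) + (w.1 + w.2 * I) := by
    simp only [Prod.fst_add, Prod.snd_add, Int.cast_add]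
    ring
  simpa only [znorm_eq_norm, h] using norm_add_le _ _

lemma one_div_rpow_sub_one_div_rpow_le {p b c : ℝ} (hp : 1 ≤ p) (hb : 0 < b) (hbc : b ≤ c) :
    1 / b ^ p - 1 / c ^ p ≤ p * (c - b) / (b ^ p * c) := by
  have hc : 0 < c := hb.trans_le hbc
  have bernoulli : 1 + p * (b / c - 1) ≤ (b / c) ^ p := by
    simpa using one_add_mul_self_le_rpow_one_add (s := b / c - 1)
      (by linarith [div_nonneg hb.le hc.le]) hp
  have hbp : 0 < b ^ p := rpow_pos_of_pos hb p
  calc 1 / b ^ p - 1 / c ^ p = (1 - (b / c) ^ p) / b ^ p := by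
        rw [div_rpow hb.le hc.le]; field_simp
    _ ≤ p * (1 - b / c) / b ^ p := by gcongr; linarith
    _ = p * (c - b) / (b ^ p * c) := by field_simp

lemma rpow_two_mul_mul_one_div_rpow_sub_le {s p a b c : ℝ} (hs : 0 ≤ s) (hp : 1 ≤ p)
    (ha : 0 < a) (hab : a ≤ b) (hbc : b ≤ c) (hcab : c ≤ a + b) :
    a ^ (2 * s) * (1 / b ^ p - 1 / c ^ p) ≤ p * a ^ (1 - p) * b ^ (s - 1) * c ^ s := by
  have hb : 0 < b := ha.trans_le hab
  have hc : 0 < c := hb.trans_le hbc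
  calc a ^ (2 * s) * (1 / b ^ p - 1 / c ^ p)
      ≤ a ^ (2 * s) * (p * (c - b) / (b ^ p * c)) := by
        gcongr; exact one_div_rpow_sub_one_div_rpow_le hp hb hbc
    _ ≤ a ^ (2 * s) * (p * a / (b ^ p * c)) := by gcongr; linarith
    _ = p * a ^ (1 - p) * (a ^ (s + p - 1) * a ^ (s + 1)) / (b ^ p * c) := by
        rw [← rpow_add ha, mul_assoc, ← rpow_add ha,
          show 1 - p + (s + p - 1 + (s + 1)) = 2 * s + 1 by ring, rpow_add_one ha.ne']
        ring
    _ ≤ p * a ^ (1 - p) * (b ^ (s + p - 1) * c ^ (s + 1)) / (b ^ p * c) := by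
        gcongr <;> linarith
    _ = p * a ^ (1 - p) * b ^ (s - 1) * c ^ s := by
        rw [rpow_add_one hc.ne', show s + p - 1 = s - 1 + p by ring, rpow_add hb]
        field_simp

theorem symmetrization_estimate_three_general (s β : ℝ) (hs : 0 ≤ s) (hβ1 : 1 / 2 < β) :
    ∃ C : ℝ, 0 < C ∧ ∀ l m k : ℤ × ℤ, l ≠ 0 → m ≠ 0 → k ≠ 0 → l + m + k = 0 →
      znorm l ≤ znorm m → znorm m ≤ znorm k →
      znorm l ^ (2 * s) * (1 / znorm m ^ (2 * β) - 1 / znorm k ^ (2 * β)) ≤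
        C * znorm l ^ (1 - 2 * β) * znorm m ^ (s - 1) * znorm k ^ s := by
  refine ⟨2 * β, by linarith, fun l m k hl _ _ hsum hlm hmk => ?_⟩
  have hk : k = -(l + m) := eq_neg_of_add_eq_zero_right hsum
  have hkl : znorm k ≤ znorm l + znorm m := by
    rw [hk, znorm_neg]; exact znorm_add_le l m
  exact rpow_two_mul_mul_one_div_rpow_sub_le hs (by linarith) (znorm_pos hl) hlm hmk hkl

theorem symmetrization_estimate_three (s β : ℝ) (hs : 0 ≤ s) (hβ1 : 1 / 2 < β) (hβ2 : β < 1) :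
    ∃ C : ℝ, 0 < C ∧ ∀ l m k : ℤ × ℤ, l ≠ 0 → m ≠ 0 → k ≠ 0 → l + m + k = 0 →
      znorm l ≤ znorm m → znorm m ≤ znorm k →
      znorm l ^ (2 * s) * (1 / znorm m ^ (2 * β) - 1 / znorm k ^ (2 * β)) ≤
        C * znorm l ^ (1 - 2 * β) * znorm m ^ (s - 1) * znorm k ^ s :=
  symmetrization_estimate_three_general s β hs hβ1
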